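/- Let 𝔬 be the ring of integers of a nonarchimedean local field (i.e., 𝔬 is a complete discrete valuation ring with finite residue field), endowed with its valuation topology, and fix a topologization of rational points over 𝔬. Then 𝔬 is proper-closed: for every proper morphism f : X → Y of locally of finite type 𝔬-schemes, the induced map f(𝔬) : X(𝔬) → Y(𝔬) is closed. -/

import Mathlib

open AlgebraicGeometry CategoryTheory CategoryTheory.Limits Topology

noncomputable section

/-- `Spec R`, as a scheme, for a commutative ring `R`. -/
abbrev SpecR (R : Type) [CommRing R] : Scheme := Spec (CommRingCat.of R)

/-- The set of `R`-points of a scheme `X` over `Spec R` with structure morphism `f`,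
i.e. the set of sections of `f`. -/
def Pts {R : Type} [CommRing R] {X : Scheme} (f : X ⟶ SpecR R) : Type :=
  { s : SpecR R ⟶ X // s ≫ f = 𝟙 (SpecR R) }

/-- The map on `R`-points induced by a morphism `g` of schemes over `Spec R`. -/
def Pts.map {R : Type} [CommRing R] {X X' : Scheme} {f : X ⟶ SpecR R} {f' : X' ⟶ SpecR R}
    (g : X ⟶ X') (w : g ≫ f' = f) (s : Pts f) : Pts f' :=
  ⟨s.1 ≫ g, by rw [Category.assoc, w, s.2]⟩

/-- Affine `n`-space over `R`. -/
abbrev AffineN (R : Type) [CommRing R] (n : ℕ) : Scheme :=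
  Spec (CommRingCat.of (MvPolynomial (Fin n) R))

/-- The structure morphism of affine `n`-space over `R`. -/
def AffineNStr (R : Type) [CommRing R] (n : ℕ) : AffineN R n ⟶ SpecR R :=
  Spec.map (CommRingCat.ofHom (algebraMap R (MvPolynomial (Fin n) R)))

/-- The canonical identification `𝔸ⁿ(R) = Rⁿ`, sending a section to its coordinates. -/
def affineCoords (R : Type) [CommRing R] (n : ℕ) (s : Pts (AffineNStr R n)) : Fin n → R :=
  fun i => Spec.preimage s.1 (MvPolynomial.X i)

/-- A topologization of rational points over `R`: an assignment of a topology to `X(R)`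
for every locally of finite type `R`-scheme `X`, satisfying (i)–(iv). -/
structure PointsTopology (R : Type) [CommRing R] [TopologicalSpace R] : Type 1 where
  /-- the topology on `X(R)` -/
  top : ∀ {X : Scheme} (f : X ⟶ SpecR R), LocallyOfFiniteType f → TopologicalSpace (Pts f)
  /-- (i) every `R`-morphism induces a continuous map on `R`-points -/
  continuous_map : ∀ {X X' : Scheme} {f : X ⟶ SpecR R} {f' : X' ⟶ SpecR R}
      (hf : LocallyOfFiniteType f) (hf' : LocallyOfFiniteType f') (g : X ⟶ X') (w : g ≫ f' = f),
      letI := top f hf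
      letI := top f' hf'
      Continuous (Pts.map g w)
  /-- (ii) the canonical bijection `𝔸ⁿ(R) = Rⁿ` is a homeomorphism -/
  affine_homeo : ∀ (n : ℕ) (h : LocallyOfFiniteType (AffineNStr R n)),
      letI := top (AffineNStr R n) h
      IsHomeomorph (affineCoords R n)
  /-- (iii) closed immersions induce topological embeddings on `R`-points -/
  closedImmersion_isEmbedding : ∀ {X X' : Scheme} {f : X ⟶ SpecR R} {f' : X' ⟶ SpecR R}
      (hf : LocallyOfFiniteType f) (hf' : LocallyOfFiniteType f') (g : X ⟶ X')
      (w : g ≫ f' = f), IsClosedImmersion g →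
      letI := top f hf
      letI := top f' hf'
      IsEmbedding (Pts.map g w)
  /-- (iv) open immersions induce open topological embeddings on `R`-points -/
  openImmersion_isOpenEmbedding : ∀ {X X' : Scheme} {f : X ⟶ SpecR R} {f' : X' ⟶ SpecR R}
      (hf : LocallyOfFiniteType f) (hf' : LocallyOfFiniteType f') (g : X ⟶ X')
      (w : g ≫ f' = f), IsOpenImmersion g →
      letI := top f hf
      letI := top f' hf'
      IsOpenEmbedding (Pts.map g w)

/-- `R` is étale-open: étale morphisms of locally of finite type `R`-schemes
induce open maps on `R`-points. -/
def EtaleOpen {R : Type} [CommRing R] [TopologicalSpace R] (T : PointsTopology R) : Prop :=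
  ∀ {X Y : Scheme} {f : X ⟶ SpecR R} {g : Y ⟶ SpecR R}
    (hf : LocallyOfFiniteType f) (hg : LocallyOfFiniteType g) (φ : X ⟶ Y) (w : φ ≫ g = f),
    IsEtale φ →
    letI := T.top f hf
    letI := T.top g hg
    IsOpenMap (Pts.map φ w)

/-- `R` is proper-closed: proper morphisms of locally of finite type `R`-schemes
induce closed maps on `R`-points. -/
def ProperClosed {R : Type} [CommRing R] [TopologicalSpace R] (T : PointsTopology R) : Prop :=
  ∀ {X Y : Scheme} {f : X ⟶ SpecR R} {g : Y ⟶ SpecR R}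
    (hf : LocallyOfFiniteType f) (hg : LocallyOfFiniteType g) (φ : X ⟶ Y) (w : φ ≫ g = f),
    IsProper φ →
    letI := T.top f hf
    letI := T.top g hg
    IsClosedMap (Pts.map φ w)

/-- `R` is finite-closed: finite morphisms of locally of finite type `R`-schemes
induce closed maps on `R`-points. -/
def FiniteClosed {R : Type} [CommRing R] [TopologicalSpace R] (T : PointsTopology R) : Prop :=
  ∀ {X Y : Scheme} {f : X ⟶ SpecR R} {g : Y ⟶ SpecR R}
    (hf : LocallyOfFiniteType f) (hg : LocallyOfFiniteType g) (φ : X ⟶ Y) (w : φ ≫ g = f),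
    IsFinite φ →
    letI := T.top f hf
    letI := T.top g hg
    IsClosedMap (Pts.map φ w)

/-! Over the compact Hausdorff ring `𝔬` (finite quotients `𝔬/𝔪ⁿ` plus completeness), a closed
embedding of an affine scheme of finite type into `𝔸ⁿ` makes its `𝔬`-points a closed subset of
the compact space `𝔬ⁿ`. An `𝔬`-point of a scheme factors through any open subscheme containing
the image of the closed point of `Spec 𝔬`, so the `𝔬`-points of a quasi-compact scheme are covered
by those of finitely many affine charts and form a compact space. For a quasi-compact (e.g.
proper) `φ : X → Y`, each affine chart `V` of `Y` thus gives an open Hausdorff set `V(𝔬)` whose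
preimage `(X ×_Y V)(𝔬)` is compact, and a continuous map with such local data is closed. -/

open Filter TopologicalSpace

theorem isClosedMap_of_forall_exists_t2_isCompact_preimage {A B : Type*} [TopologicalSpace A]
    [TopologicalSpace B] {f : A → B} (hf : Continuous f)
    (h : ∀ y, ∃ V : Opens B, y ∈ V ∧ T2Space V ∧ IsCompact (f ⁻¹' V)) : IsClosedMap f := by
  choose V hyV hV hK using h
  have hcover : IsOpenCover V := .mk <| top_le_iff.1 fun y _ => Opens.mem_iSup.2 ⟨y, hyV y⟩
  refine (hcover.isClosedMap_iff_restrictPreimage).2 fun y => ?_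
  have := isCompact_iff_compactSpace.1 (hK y)
  exact hf.restrictPreimage.isClosedMap

theorem Ideal.smul_top_eq_self {R : Type*} [CommRing R] (I : Ideal R) :
    I • (⊤ : Submodule R R) = I := by
  rw [smul_eq_mul, Ideal.mul_top]

section Adic

variable {R : Type*} [CommRing R] [TopologicalSpace R] {I : Ideal R}

theorem IsAdic.t2Space [IsTopologicalRing R] [IsHausdorff I R] (hI : IsAdic I) : T2Space R := by
  refine IsTopologicalAddGroup.t2Space_of_zero_sep fun x hx => ?_
  obtain ⟨n, hn⟩ : ∃ n, x ∉ I ^ n := by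
    by_contra! h
    exact hx <| IsHausdorff.haus ‹_› x fun n => SModEq.zero.2 <| by
      rw [Ideal.smul_top_eq_self]; exact h n
  exact ⟨_, hI.hasBasis_nhds_zero.mem_of_mem trivial, hn⟩

theorem IsAdic.compactSpace [IsAdicComplete I R] (hI : IsAdic I)
    (hfin : ∀ n, Finite (R ⧸ I ^ n)) : CompactSpace R := by
  refine ⟨isCompact_iff_ultrafilter_le_nhds.2 fun F _ => ?_⟩
  have hclass : ∀ n, ∃ a : R, {x | x ≡ a [SMOD I ^ n]} ∈ F := by
    intro n
    obtain ⟨c, hc⟩ := (F.map (Ideal.Quotient.mk (I ^ n))).eq_pure_of_finite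
    obtain ⟨a, rfl⟩ := Ideal.Quotient.mk_surjective c
    have : {Ideal.Quotient.mk (I ^ n) a} ∈ F.map (Ideal.Quotient.mk (I ^ n)) := by
      rw [hc]; exact Ultrafilter.mem_pure.2 rfl
    exact ⟨a, this⟩
  choose a ha using hclass
  have hcauchy : ∀ {m n}, m ≤ n → a m ≡ a n [SMOD I ^ m • (⊤ : Submodule R R)] := by
    intro m n hmn
    obtain ⟨z, hzm, hzn⟩ := F.nonempty_of_mem (inter_mem (ha m) (ha n))
    rw [Ideal.smul_top_eq_self]
    exact hzm.symm.trans (hzn.mono (Ideal.pow_le_pow_right hmn))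
  obtain ⟨L, hL⟩ := IsPrecomplete.prec inferInstance hcauchy
  refine ⟨L, trivial, (hI.hasBasis_nhds L).ge_iff.2 fun n _ => mem_of_superset (ha n) ?_⟩
  intro x hx
  refine ⟨x - L, ?_, add_sub_cancel L x⟩
  rw [← Ideal.smul_top_eq_self (I ^ n)] at hx ⊢
  exact SModEq.sub_mem.1 (hx.trans (hL n))

end Adic

namespace Pts

variable {R : Type} [CommRing R]

theorem mem_range_map_iff {X X' : Scheme} {f : X ⟶ SpecR R} {f' : X' ⟶ SpecR R}
    (g : X ⟶ X') (w : g ≫ f' = f) (s : Pts f') :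
    s ∈ Set.range (Pts.map g w) ↔ ∃ t : SpecR R ⟶ X, t ≫ g = s.1 := by
  constructor
  · rintro ⟨t, rfl⟩
    exact ⟨t.1, rfl⟩
  · rintro ⟨t, ht⟩
    exact ⟨⟨t, by rw [← w, ← Category.assoc, ht, s.2]⟩, Subtype.ext ht⟩

theorem preimage_range_map_eq_range_map_pullbackFst {X Y V : Scheme} {f : X ⟶ SpecR R}
    {g : Y ⟶ SpecR R} (φ : X ⟶ Y) (w : φ ≫ g = f) (ι : V ⟶ Y) :
    Pts.map φ w ⁻¹' Set.range (Pts.map ι (f' := g) rfl) =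
      Set.range (Pts.map (pullback.fst φ ι) (f' := f) rfl) := by
  ext x
  simp only [Set.mem_preimage, mem_range_map_iff]
  constructor
  · rintro ⟨t, ht⟩
    exact ⟨pullback.lift x.1 t ht.symm, pullback.lift_fst _ _ _⟩
  · rintro ⟨t, ht⟩
    exact ⟨t ≫ pullback.snd φ ι, by
      rw [Category.assoc, ← pullback.condition, ← Category.assoc, ht]; rfl⟩

theorem mem_range_map_of_closedPoint_mem_range [IsLocalRing R] {U X : Scheme} (ι : U ⟶ X)
    [IsOpenImmersion ι] {f : X ⟶ SpecR R} (s : Pts f)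
    (h : s.1.base (IsLocalRing.closedPoint R : PrimeSpectrum (CommRingCat.of R)) ∈
      Set.range ι.base) :
    s ∈ Set.range (Pts.map ι (f' := f) rfl) := by
  rw [mem_range_map_iff]
  -- every point of `Spec R` specializes to the closed point, and open sets are stable under
  -- generalization
  have hrange : Set.range s.1.base ⊆ Set.range ι.base := by
    rintro _ ⟨z, rfl⟩
    exact (IsOpenImmersion.isOpen_range ι).stableUnderGeneralization
      ((IsLocalRing.specializes_closedPoint (R := R) z).map s.1.base.hom.2) h
  exact ⟨IsOpenImmersion.lift ι s.1 hrange, IsOpenImmersion.lift_fac ι s.1 hrange⟩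

end Pts

section Affine

variable {R : Type} [CommRing R]

theorem locallyOfFiniteType_affineNStr (n : ℕ) : LocallyOfFiniteType (AffineNStr R n) := by
  rw [AffineNStr, HasRingHomProperty.Spec_iff (P := @LocallyOfFiniteType)]
  exact RingHom.finiteType_algebraMap.2 inferInstance

theorem Pts.preimage_hom_eq_eval_affineCoords {n : ℕ} (s : Pts (AffineNStr R n)) :
    (Spec.preimage s.1).hom = MvPolynomial.eval (affineCoords R n s) := by
  have hsec : CommRingCat.ofHom (algebraMap R (MvPolynomial (Fin n) R)) ≫ Spec.preimage s.1 =
      𝟙 _ :=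
    Spec.map_injective (by rw [Spec.map_comp, Spec.map_preimage, Spec.map_id]; exact s.2)
  refine MvPolynomial.ringHom_ext (fun r => ?_) fun i => ?_
  · simpa using ConcreteCategory.congr_hom hsec r
  · simp [affineCoords]

theorem exists_comp_specMap_eq_iff_ker_le {A B C : CommRingCat} (κ : A ⟶ B)
    (hκ : Function.Surjective κ) (s : Spec C ⟶ Spec A) :
    (∃ t : Spec C ⟶ Spec B, t ≫ Spec.map κ = s) ↔
      RingHom.ker κ.hom ≤ RingHom.ker (Spec.preimage s).hom := by
  constructor
  · rintro ⟨t, rfl⟩ p hp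
    rw [← Spec.map_preimage t, ← Spec.map_comp, Spec.preimage_map]
    simp [RingHom.mem_ker.1 hp]
  · intro h
    let τ := κ.hom.liftOfRightInverse _ (Function.rightInverse_surjInv hκ) ⟨_, h⟩
    refine ⟨Spec.map (CommRingCat.ofHom τ), ?_⟩
    rw [← Spec.map_comp, ← Spec.map_preimage s]
    congr 1
    ext p
    exact κ.hom.liftOfRightInverse_comp_apply _ (Function.rightInverse_surjInv hκ) _ p

theorem exists_surjective_specMap_comp_affineNStr {U : Scheme} [IsAffine U]
    (f : U ⟶ SpecR R) [LocallyOfFiniteType f] :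
    ∃ (n : ℕ) (κ : CommRingCat.of (MvPolynomial (Fin n) R) ⟶ Γ(U, ⊤)),
      Function.Surjective κ ∧ (U.isoSpec.hom ≫ Spec.map κ) ≫ AffineNStr R n = f := by
  set ρ := Spec.preimage (U.isoSpec.inv ≫ f)
  have hρ : Spec.map ρ = U.isoSpec.inv ≫ f := Spec.map_preimage _
  have hft : ρ.hom.FiniteType := by
    rw [← HasRingHomProperty.Spec_iff (P := @LocallyOfFiniteType), hρ]
    infer_instance
  let := ρ.hom.toAlgebra
  obtain ⟨n, ψ, hψ⟩ := Algebra.FiniteType.iff_quotient_mvPolynomial''.1 hft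
  refine ⟨n, CommRingCat.ofHom ψ.toRingHom, hψ, ?_⟩
  have hκ : CommRingCat.ofHom (algebraMap R (MvPolynomial (Fin n) R)) ≫
      CommRingCat.ofHom ψ.toRingHom = ρ := by
    ext r
    exact ψ.commutes r
  rw [Category.assoc, AffineNStr, ← Spec.map_comp, hκ, hρ, Iso.hom_inv_id_assoc]

end Affine

namespace PointsTopology

variable {R : Type} [CommRing R] [TopologicalSpace R] (T : PointsTopology R)

theorem exists_isClosedEmbedding_of_isAffine [IsTopologicalRing R] [T2Space R] {U : Scheme}
    [IsAffine U] (f : U ⟶ SpecR R) (hf : LocallyOfFiniteType f) :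
    letI := T.top f hf
    ∃ (n : ℕ) (e : Pts f → (Fin n → R)), IsClosedEmbedding e := by
  let := T.top f hf
  obtain ⟨n, κ, hκ, w⟩ := exists_surjective_specMap_comp_affineNStr f
  have hA := locallyOfFiniteType_affineNStr (R := R) n
  let := T.top _ hA
  have hcoords := T.affine_homeo n hA
  have := IsClosedImmersion.spec_of_surjective κ hκ
  have hg := T.closedImmersion_isEmbedding hf hA _ w inferInstance
  have hrange : Set.range (Pts.map _ w) =
      affineCoords R n ⁻¹' {a | ∀ p ∈ RingHom.ker κ.hom, MvPolynomial.eval a p = 0} := by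
    ext s
    rw [Pts.mem_range_map_iff]
    calc (∃ t, t ≫ U.isoSpec.hom ≫ Spec.map κ = s.1)
        ↔ ∃ t, t ≫ Spec.map κ = s.1 :=
          ⟨fun ⟨t, ht⟩ => ⟨t ≫ U.isoSpec.hom, by simpa using ht⟩,
            fun ⟨t, ht⟩ => ⟨t ≫ U.isoSpec.inv, by simpa using ht⟩⟩
      _ ↔ RingHom.ker κ.hom ≤ RingHom.ker (Spec.preimage s.1).hom :=
          exists_comp_specMap_eq_iff_ker_le κ hκ s.1
      _ ↔ _ := by rw [Pts.preimage_hom_eq_eval_affineCoords]; rfl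
  have hzero : IsClosed {a : Fin n → R | ∀ p ∈ RingHom.ker κ.hom, MvPolynomial.eval a p = 0} := by
    simp only [Set.ofPred_forall]
    exact isClosed_biInter fun p _ => isClosed_eq (MvPolynomial.continuous_eval p) continuous_const
  refine ⟨n, affineCoords R n ∘ Pts.map _ w, hcoords.isEmbedding.comp hg, ?_⟩
  rw [Set.range_comp, hrange, Set.image_preimage_eq _ hcoords.surjective]
  exact hzero

theorem t2Space_of_isAffine [IsTopologicalRing R] [T2Space R] {U : Scheme} [IsAffine U]
    (f : U ⟶ SpecR R) (hf : LocallyOfFiniteType f) :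
    letI := T.top f hf
    T2Space (Pts f) := by
  let := T.top f hf
  obtain ⟨n, e, he⟩ := T.exists_isClosedEmbedding_of_isAffine f hf
  exact he.isEmbedding.t2Space

theorem compactSpace_of_isAffine [IsTopologicalRing R] [T2Space R] [CompactSpace R] {U : Scheme}
    [IsAffine U] (f : U ⟶ SpecR R) (hf : LocallyOfFiniteType f) :
    letI := T.top f hf
    CompactSpace (Pts f) := by
  let := T.top f hf
  obtain ⟨n, e, he⟩ := T.exists_isClosedEmbedding_of_isAffine f hf
  exact he.compactSpace

theorem compactSpace [IsLocalRing R] [IsTopologicalRing R] [T2Space R] [CompactSpace R]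
    {X : Scheme} [CompactSpace X] (f : X ⟶ SpecR R) (hf : LocallyOfFiniteType f) :
    letI := T.top f hf
    CompactSpace (Pts f) := by
  let := T.top f hf
  let 𝒰 := X.affineCover.finiteSubcover
  have hcover : ⋃ j, Set.range (Pts.map (𝒰.f j) (f' := f) rfl) = Set.univ :=
    Set.eq_univ_of_forall fun s => Set.mem_iUnion.2 ⟨_,
      Pts.mem_range_map_of_closedPoint_mem_range _ s (𝒰.covers _)⟩
  refine ⟨hcover ▸ isCompact_iUnion fun j => ?_⟩
  have : IsAffine (𝒰.X j) := inferInstanceAs (IsAffine (X.affineCover.X _))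
  let := T.top _ (inferInstance : LocallyOfFiniteType (𝒰.f j ≫ f))
  have := T.compactSpace_of_isAffine (𝒰.f j ≫ f) inferInstance
  exact isCompact_range (T.continuous_map _ hf _ rfl)

theorem isClosedMap_of_quasiCompact [IsLocalRing R] [IsTopologicalRing R] [T2Space R]
    [CompactSpace R] {X Y : Scheme} {f : X ⟶ SpecR R} {g : Y ⟶ SpecR R}
    (hf : LocallyOfFiniteType f) (hg : LocallyOfFiniteType g) (φ : X ⟶ Y) (w : φ ≫ g = f)
    [QuasiCompact φ] :
    letI := T.top f hf
    letI := T.top g hg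
    IsClosedMap (Pts.map φ w) := by
  let := T.top f hf
  let := T.top g hg
  refine isClosedMap_of_forall_exists_t2_isCompact_preimage (T.continuous_map hf hg φ w)
    fun y => ?_
  let ι := Y.affineCover.f (Y.affineCover.idx (y.1.base (IsLocalRing.closedPoint R)))
  let := T.top (ι ≫ g) inferInstance
  have hι := T.openImmersion_isOpenEmbedding inferInstance hg ι rfl inferInstance
  have := T.t2Space_of_isAffine (ι ≫ g) inferInstance
  let := T.top (pullback.fst φ ι ≫ f) inferInstance
  have := T.compactSpace (pullback.fst φ ι ≫ f) inferInstance
  refine ⟨⟨_, hι.isOpen_range⟩, Pts.mem_range_map_of_closedPoint_mem_range ι y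
    (Y.affineCover.covers _), hι.isEmbedding.toHomeomorph.symm.isEmbedding.t2Space, ?_⟩
  change IsCompact (_ ⁻¹' Set.range _)
  rw [Pts.preimage_range_map_eq_range_map_pullbackFst]
  exact isCompact_range (T.continuous_map _ hf _ rfl)

end PointsTopology

theorem statement_6_general (O : Type) [CommRing O] [IsDomain O] [IsDiscreteValuationRing O]
    [IsAdicComplete (IsLocalRing.maximalIdeal O) O]
    [Finite (IsLocalRing.ResidueField O)]
    [TopologicalSpace O] [IsTopologicalRing O]
    (hval : (nhds (0 : O)).HasBasis (fun _ : ℕ => True)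
      (fun n => ((IsLocalRing.maximalIdeal O ^ n : Ideal O) : Set O)))
    (T : PointsTopology O) :
    ProperClosed T := by
  have hadic : IsAdic (IsLocalRing.maximalIdeal O) := isAdic_iff.2
    ⟨fun n => AddSubgroup.isOpen_of_mem_nhds (Submodule.toAddSubgroup _) (hval.mem_of_mem trivial),
      fun s hs => by simpa using hval.mem_iff.1 hs⟩
  have := hadic.t2Space
  have : Finite (O ⧸ IsLocalRing.maximalIdeal O) :=
    inferInstanceAs (Finite (IsLocalRing.ResidueField O))
  have := hadic.compactSpace (Ideal.finite_quotient_pow (IsNoetherian.noetherian _))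
  intro X Y f g hf hg φ w _
  exact T.isClosedMap_of_quasiCompact hf hg φ w

/-- the ring of integers `O` of a nonarchimedean local field (a complete
discrete valuation ring with finite residue field), with its valuation topology
(characterized by: `O` is a topological ring whose neighborhoods of `0` have the powers of
the maximal ideal as a basis), is proper-closed. -/
theorem statement_6 (O : Type) [CommRing O] [IsDomain O] [IsDiscreteValuationRing O]
    [IsAdicComplete (IsLocalRing.maximalIdeal O) O]
    [Finite (IsLocalRing.ResidueField O)]
    [TopologicalSpace O] [IsTopologicalRing O]
    (hval : (nhds (0 : O)).HasBasis (fun _ : ℕ => True)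
      (fun n => ((IsLocalRing.maximalIdeal O ^ n : Ideal O) : Set O)))
    (hunit : IsOpen {x : O | IsUnit x})
    (hinv : ContinuousOn (fun x : O => Ring.inverse x) {x : O | IsUnit x})
    (T : PointsTopology O) :
    ProperClosed T :=
  statement_6_general O hval T
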